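/- (Inner-iterate sensitivity to hyperparameters, Eq. (A5-4).) Let θ_k(λ) and θ_k(λ′) be the inner gradient-descent iterates started from the same initialization θ_0 with step size α_in > 0 for hyperparameters λ and λ′ respectively, i.e. θ_{k+1}(λ) = θ_k(λ) − α_in ∇_θ G(λ, θ_k(λ)). If ∇G is L-Lipschitz jointly in (λ,θ), then for every K ≥ 0: ‖θ_K(λ) − θ_K(λ′)‖ ≤ ( (α_in L + 1)^K − 1 )·‖λ − λ′‖. -/
import Mathlib


noncomputable section
open scoped RealInnerProductSpace BigOperators

/-- `ℝ^n` with the Euclidean norm. -/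
abbrev Evec (n : ℕ) : Type := EuclideanSpace ℝ (Fin n)

/-- Partial gradient in the first (hyperparameter) variable. -/
def gradL {p r : ℕ} (f : Evec p → Evec r → ℝ) (l : Evec p) (t : Evec r) : Evec p :=
  gradient (fun l' => f l' t) l

/-- Partial gradient in the second (parameter) variable. -/
def gradT {p r : ℕ} (f : Evec p → Evec r → ℝ) (l : Evec p) (t : Evec r) : Evec r :=
  gradient (fun t' => f l t') t

/-- Euclidean norm of a pair of vectors (the joint Euclidean norm on `ℝ^p × ℝ^r`). -/
def jn {a b : ℕ} (x : Evec a) (y : Evec b) : ℝ := Real.sqrt (‖x‖ ^ 2 + ‖y‖ ^ 2)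

/-- **inner-iterate sensitivity to hyperparameters, Eq. (A5-4).** If `∇G`
is `L`-Lipschitz jointly in `(λ,θ)`, then the inner gradient-descent iterates started from
the same initialization satisfy `‖θ_K(λ) − θ_K(λ′)‖ ≤ ((α_in L + 1)^K − 1) ‖λ − λ′‖`
for every `K ≥ 0`. -/
theorem inner_iterate_sensitivity
    {p r : ℕ} (G : Evec p → Evec r → ℝ)
    (hG : ContDiff ℝ 1 (fun w : Evec p × Evec r => G w.1 w.2))
    (L : ℝ)
    (hgradG : ∀ l t l' t',
      jn (gradL G l t - gradL G l' t') (gradT G l t - gradT G l' t')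
        ≤ L * jn (l - l') (t - t'))
    (αin : ℝ) (hα : 0 < αin)
    (θ0 : Evec r) (θit : ℕ → Evec p → Evec r)
    (hθ0 : ∀ l, θit 0 l = θ0)
    (hθs : ∀ k l, θit (k + 1) l = θit k l - αin • gradT G l (θit k l))
    (l l' : Evec p) :
    ∀ K : ℕ, ‖θit K l - θit K l'‖ ≤ ((αin * L + 1) ^ K - 1) * ‖l - l'‖ := by

  have hjn_nonneg : ∀ {a b : ℕ} (x : Evec a) (y : Evec b), 0 ≤ jn x y := by
    intro a b x y; exact Real.sqrt_nonneg _
  have hjn_le : ∀ {a b : ℕ} (x : Evec a) (y : Evec b), jn x y ≤ ‖x‖ + ‖y‖ := by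
    intro a b x y
    have h : ‖x‖ ^ 2 + ‖y‖ ^ 2 ≤ (‖x‖ + ‖y‖) ^ 2 := by nlinarith [norm_nonneg x, norm_nonneg y]
    calc jn x y ≤ Real.sqrt ((‖x‖ + ‖y‖) ^ 2) := Real.sqrt_le_sqrt h
      _ = ‖x‖ + ‖y‖ := Real.sqrt_sq (by positivity)
  have hsnd_le : ∀ {a b : ℕ} (x : Evec a) (y : Evec b), ‖y‖ ≤ jn x y := by
    intro a b x y
    have : ‖y‖ = Real.sqrt (‖y‖ ^ 2) := (Real.sqrt_sq (norm_nonneg _)).symm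
    rw [this]
    exact Real.sqrt_le_sqrt (by nlinarith [norm_nonneg x, norm_nonneg y])
  by_cases hll : l = l'
  · subst hll
    intro K
    have : θit K l - θit K l = 0 := sub_self _
    simp [this]
  · have hlpos : 0 < ‖l - l'‖ := by
      simpa [sub_eq_zero] using (norm_pos_iff.mpr (sub_ne_zero.mpr hll))
    have hL : 0 ≤ L := by
      have h := hgradG l 0 l' 0
      have hjn0 : jn (l - l') ((0 : Evec r) - 0) = ‖l - l'‖ := by
        simp [jn, Real.sqrt_sq (norm_nonneg _)]
      rw [hjn0] at h
      have h0 : (0:ℝ) ≤ L * ‖l - l'‖ := le_trans (hjn_nonneg _ _) h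
      nlinarith
    intro K
    induction K with
    | zero => simp [hθ0]
    | succ k ih =>
      have key : ‖θit (k+1) l - θit (k+1) l'‖ ≤
          ‖θit k l - θit k l'‖ + αin * (L * (‖l - l'‖ + ‖θit k l - θit k l'‖)) := by
        rw [hθs k l, hθs k l']
        have heq : θit k l - αin • gradT G l (θit k l) -
            (θit k l' - αin • gradT G l' (θit k l')) =
            (θit k l - θit k l') - αin • (gradT G l (θit k l) - gradT G l' (θit k l')) := by
          rw [smul_sub]; abel
        rw [heq]
        have h1 : ‖(θit k l - θit k l') - αin • (gradT G l (θit k l) - gradT G l' (θit k l'))‖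
            ≤ ‖θit k l - θit k l'‖ + ‖αin • (gradT G l (θit k l) - gradT G l' (θit k l'))‖ :=
          norm_sub_le _ _
        refine h1.trans ?_
        gcongr
        rw [norm_smul, Real.norm_eq_abs, abs_of_pos hα]
        gcongr
        calc ‖gradT G l (θit k l) - gradT G l' (θit k l')‖
            ≤ jn (gradL G l (θit k l) - gradL G l' (θit k l'))
                (gradT G l (θit k l) - gradT G l' (θit k l')) := hsnd_le _ _
          _ ≤ L * jn (l - l') (θit k l - θit k l') := hgradG _ _ _ _
          _ ≤ L * (‖l - l'‖ + ‖θit k l - θit k l'‖) := by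
              exact mul_le_mul_of_nonneg_left (hjn_le _ _) hL
      rw [pow_succ]
      nlinarith [mul_le_mul_of_nonneg_left ih (show (0:ℝ) ≤ αin * L + 1 by nlinarith),
        norm_nonneg (θit k l - θit k l'),
        mul_nonneg (mul_nonneg hα.le hL) (norm_nonneg (θit k l - θit k l'))]
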